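/- Let x^R ∈ C[0,1] be the Takagi–Landsberg function with Faber–Schauder coefficients θ_{m,k} = 2^{m(1/2−R)} for all m ≥ 0, 0 ≤ k ≤ 2^m − 1 (and x^R(0) = x^R(1) = 0). Then for y^R(t) = ∫₀ᵗ x^R(s) ds, the coefficients ϑ_{n,k} computed from y^R equal 2^{n(1/2−R)} for all n and k, and consequently R̂_n(y^R) = R for every n ∈ ℕ. -/

import Mathlib

open Finset

/-- The basic Faber–Schauder hat function. -/
noncomputable def e00 (t : ℝ) : ℝ := max (min t (1 - t)) 0

/-- The Faber–Schauder function `e_{m,k}`. -/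
noncomputable def emk (m k : ℕ) (t : ℝ) : ℝ := 2 ^ (-(m : ℝ) / 2) * e00 (2 ^ m * t - k)

/-- The Takagi–Landsberg function with parameter `R`. -/
noncomputable def takagiLandsberg (R : ℝ) (t : ℝ) : ℝ :=
  ∑' m : ℕ, ∑ k ∈ range (2 ^ m), 2 ^ ((m : ℝ) * (1 / 2 - R)) * emk m k t

/-- Antiderivative. -/
noncomputable def yR (R : ℝ) (t : ℝ) : ℝ := ∫ s in (0 : ℝ)..t, takagiLandsberg R s

noncomputable def vartheta (y : ℝ → ℝ) (n k : ℕ) : ℝ :=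
  2 ^ ((3 * (n : ℝ)) / 2 + 3) *
    (y ((4 * k) / 2 ^ (n + 2)) - 2 * y ((4 * k + 1) / 2 ^ (n + 2))
      + 2 * y ((4 * k + 3) / 2 ^ (n + 2)) - y ((4 * k + 4) / 2 ^ (n + 2)))

noncomputable def Rhat (y : ℝ → ℝ) (n : ℕ) : ℝ :=
  1 - (1 / (n : ℝ)) * Real.logb 2 (Real.sqrt (∑ k ∈ range (2 ^ n), (vartheta y n k) ^ 2))

/-!
With `Λ f = f v - 2 f (v + d) + 2 f (v + 3d) - f (v + 4d)`, `v = k 2^{-n}`, `d = 2^{-n-2}`, the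
coefficient `ϑ_{n,k}(y)` is `2^{3n/2+3} Λ y`. Integrating the Faber–Schauder series termwise gives
`y^R(t) = ∑_m 2^{-mR} 2^{-m} S_m(2^m t)`, where `S_m = ∑_{k < 2^m} E(· - k)` and `E` is the
primitive of the hat `e_{0,0}`. The functional `Λ` kills quadratic polynomials and every function
whose increments over `2d` are constant. For `m < n`, `S_m(2^m ·)` is a single quadratic on the
dyadic interval `[k 2^{-n}, (k+1) 2^{-n}]`; for `m > n`, its increments over `2^{-n-1}` are
constant because `S_m(v + 1) = S_m(v) + 1/4`. Only the level `m = n` survives, and it contributes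
`2^{-nR-n} / 8`.
-/

open Set intervalIntegral

section Hat

variable {u : ℝ}

lemma e00_nonneg (u : ℝ) : 0 ≤ e00 u := le_max_right _ _

lemma e00_of_nonpos (h : u ≤ 0) : e00 u = 0 :=
  max_eq_right ((min_le_left _ _).trans h)

lemma e00_of_one_le (h : 1 ≤ u) : e00 u = 0 :=
  max_eq_right ((min_le_right _ _).trans (by linarith))

lemma e00_of_le_half (h₀ : 0 ≤ u) (h₁ : u ≤ 1 / 2) : e00 u = u := by
  rw [e00, min_eq_left (by linarith), max_eq_left h₀]

lemma e00_of_half_le (h₀ : 1 / 2 ≤ u) (h₁ : u ≤ 1) : e00 u = 1 - u := by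
  rw [e00, min_eq_right (by linarith), max_eq_left (by linarith)]

lemma continuous_e00 : Continuous e00 := by
  unfold e00; fun_prop

noncomputable def hatIntegral (u : ℝ) : ℝ := ∫ s in (0 : ℝ)..u, e00 s

lemma intervalIntegrable_e00 (a b : ℝ) : IntervalIntegrable e00 MeasureTheory.volume a b :=
  continuous_e00.intervalIntegrable a b

lemma hatIntegral_of_nonpos (h : u ≤ 0) : hatIntegral u = 0 := by
  rw [hatIntegral, integral_congr (g := fun _ => 0), integral_zero]
  intro s hs
  rw [uIcc_of_ge h] at hs
  exact e00_of_nonpos hs.2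

lemma hatIntegral_of_le_half (h₀ : 0 ≤ u) (h₁ : u ≤ 1 / 2) : hatIntegral u = u ^ 2 / 2 := by
  rw [hatIntegral, integral_congr (g := fun s => s), integral_id]
  · ring
  intro s hs
  rw [uIcc_of_le h₀] at hs
  exact e00_of_le_half hs.1 (hs.2.trans h₁)

lemma hatIntegral_of_half_le (h₀ : 1 / 2 ≤ u) (h₁ : u ≤ 1) :
    hatIntegral u = 1 / 4 - (1 - u) ^ 2 / 2 := by
  have hmid : ∫ s in (1 / 2 : ℝ)..u, e00 s = ∫ s in (1 / 2 : ℝ)..u, (1 - s) := by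
    refine integral_congr fun s hs => ?_
    rw [uIcc_of_le h₀] at hs
    exact e00_of_half_le hs.1 (hs.2.trans h₁)
  rw [hatIntegral, ← integral_add_adjacent_intervals (intervalIntegrable_e00 0 (1 / 2))
    (intervalIntegrable_e00 _ u), ← hatIntegral, hatIntegral_of_le_half (by norm_num) le_rfl,
    hmid, integral_sub intervalIntegrable_const intervalIntegrable_id, integral_const, integral_id]
  simp only [smul_eq_mul]
  ring

lemma hatIntegral_of_one_le (h : 1 ≤ u) : hatIntegral u = 1 / 4 := by
  have htail : ∫ s in (1 : ℝ)..u, e00 s = 0 := by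
    rw [integral_congr (g := fun _ => 0), integral_zero]
    intro s hs
    rw [uIcc_of_le h] at hs
    exact e00_of_one_le hs.1
  rw [hatIntegral, ← integral_add_adjacent_intervals (intervalIntegrable_e00 0 1)
    (intervalIntegrable_e00 1 u), htail, ← hatIntegral,
    hatIntegral_of_half_le (by norm_num) le_rfl]
  norm_num

lemma hatIntegral_mem_Icc (u : ℝ) : hatIntegral u ∈ Set.Icc 0 (1 / 4) := by
  rcases le_total u 0 with h0 | h0
  · rw [hatIntegral_of_nonpos h0]; norm_num
  rcases le_total u (1 / 2) with h1 | h1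
  · rw [hatIntegral_of_le_half h0 h1]; constructor <;> nlinarith
  rcases le_total u 1 with h2 | h2
  · rw [hatIntegral_of_half_le h1 h2]; constructor <;> nlinarith
  · rw [hatIntegral_of_one_le h2]; norm_num

end Hat

noncomputable def hatIntegralSum (N : ℕ) (v : ℝ) : ℝ :=
  ∑ k ∈ Finset.range N, hatIntegral (v - k)

section HatIntegralSum

variable {N : ℕ} {v : ℝ}

lemma hatIntegralSum_mem_Icc (N : ℕ) (v : ℝ) :
    hatIntegralSum N v ∈ Set.Icc 0 ((N : ℝ) / 4) := by
  constructor
  · exact Finset.sum_nonneg fun k _ => (hatIntegral_mem_Icc _).1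
  · calc hatIntegralSum N v ≤ ∑ _k ∈ Finset.range N, (1 / 4 : ℝ) :=
          Finset.sum_le_sum fun k _ => (hatIntegral_mem_Icc _).2
      _ = N / 4 := by rw [Finset.sum_const, Finset.card_range, nsmul_eq_mul]; ring

lemma hatIntegralSum_of_mem_Icc {j : ℕ} (hj : j < N) (hv : v ∈ Set.Icc (j : ℝ) (j + 1)) :
    hatIntegralSum N v = j / 4 + hatIntegral (v - j) := by
  obtain ⟨r, rfl⟩ : ∃ r, N = j + 1 + r := ⟨N - j - 1, by omega⟩
  have hleft : ∀ k ∈ Finset.range j, hatIntegral (v - k) = 1 / 4 := fun k hk =>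
    hatIntegral_of_one_le (by
      have : (k : ℝ) + 1 ≤ j := by exact_mod_cast Finset.mem_range.mp hk
      linarith [hv.1])
  have hright : ∀ i ∈ Finset.range r, hatIntegral (v - ↑(j + 1 + i)) = 0 := fun i _ =>
    hatIntegral_of_nonpos (by push_cast; linarith [hv.2, (i.cast_nonneg : (0 : ℝ) ≤ i)])
  rw [hatIntegralSum, Finset.sum_range_add, Finset.sum_range_succ, Finset.sum_congr rfl hleft,
    Finset.sum_congr rfl hright, Finset.sum_const, Finset.card_range, nsmul_eq_mul,
    Finset.sum_const_zero, add_zero]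
  ring

lemma hatIntegralSum_add_one (hv : 0 ≤ v) (hN : v + 1 ≤ N) :
    hatIntegralSum N (v + 1) = hatIntegralSum N v + 1 / 4 := by
  have hN₀ : 0 < N := by exact_mod_cast (by linarith : (0 : ℝ) < N)
  obtain ⟨N, rfl⟩ := Nat.exists_eq_add_one.mpr hN₀
  rw [hatIntegralSum, hatIntegralSum, Finset.sum_range_succ', Finset.sum_range_succ,
    hatIntegral_of_one_le (by simpa using hv), hatIntegral_of_nonpos (by push_cast at hN; linarith)]
  push_cast
  simp only [add_sub_add_right_eq_sub]
  ring

lemma hatIntegralSum_add_nat (M : ℕ) (hv : 0 ≤ v) (hN : v + M ≤ N) :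
    hatIntegralSum N (v + M) = hatIntegralSum N v + M / 4 := by
  induction M with
  | zero => simp
  | succ M ih =>
    push_cast at hN ⊢
    rw [← add_assoc, hatIntegralSum_add_one (by positivity) (by linarith), ih (by linarith)]
    ring

lemma exists_quadratic_eqOn_hatIntegralSum {q : ℕ} (hq : q < 2 * N) :
    ∃ α β γ : ℝ, ∀ v ∈ Set.Icc (q / 2 : ℝ) ((q + 1) / 2),
      hatIntegralSum N v = α + β * v + γ * v ^ 2 := by
  obtain ⟨j, rfl | rfl⟩ := Nat.even_or_odd' q
  · refine ⟨j / 4 + j ^ 2 / 2, -j, 1 / 2, fun v hv => ?_⟩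
    push_cast at hv
    rw [hatIntegralSum_of_mem_Icc (j := j) (by omega) ⟨by linarith [hv.1], by linarith [hv.2]⟩,
      hatIntegral_of_le_half (by linarith [hv.1]) (by linarith [hv.2])]
    ring
  · refine ⟨j / 4 + 1 / 4 - (j + 1) ^ 2 / 2, j + 1, -1 / 2, fun v hv => ?_⟩
    push_cast at hv
    rw [hatIntegralSum_of_mem_Icc (j := j) (by omega) ⟨by linarith [hv.1], by linarith [hv.2]⟩,
      hatIntegral_of_half_le (by linarith [hv.1]) (by linarith [hv.2])]
    ring

end HatIntegralSum

def quarterDiff (f : ℝ → ℝ) (v d : ℝ) : ℝ :=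
  f v - 2 * f (v + d) + 2 * f (v + 3 * d) - f (v + 4 * d)

section QuarterDiff

variable {f : ℝ → ℝ} {v d : ℝ}

lemma vartheta_eq_quarterDiff (y : ℝ → ℝ) (n k : ℕ) :
    vartheta y n k =
      2 ^ ((3 * (n : ℝ)) / 2 + 3) * quarterDiff y (4 * k / 2 ^ (n + 2)) (1 / 2 ^ (n + 2)) := by
  simp only [vartheta, quarterDiff, add_div, mul_one_div]

lemma quarterDiff_const_mul_comp_mul (c a : ℝ) :
    quarterDiff (fun t => c * f (a * t)) v d = c * quarterDiff f (a * v) (a * d) := by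
  simp only [quarterDiff, mul_add, mul_left_comm a]
  ring

lemma HasSum.quarterDiff {F : ℕ → ℝ → ℝ} (h₀ : HasSum (fun m => F m v) (f v))
    (h₁ : HasSum (fun m => F m (v + d)) (f (v + d)))
    (h₃ : HasSum (fun m => F m (v + 3 * d)) (f (v + 3 * d)))
    (h₄ : HasSum (fun m => F m (v + 4 * d)) (f (v + 4 * d))) :
    HasSum (fun m => quarterDiff (F m) v d) (quarterDiff f v d) :=
  ((h₀.sub (h₁.mul_left 2)).add (h₃.mul_left 2)).sub h₄

lemma quarterDiff_eq_zero_of_eqOn_quadratic (hd : 0 ≤ d) {α β γ : ℝ}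
    (h : ∀ x ∈ Set.Icc v (v + 4 * d), f x = α + β * x + γ * x ^ 2) :
    quarterDiff f v d = 0 := by
  have mem : ∀ i : ℝ, 0 ≤ i → i ≤ 4 → v + i * d ∈ Set.Icc v (v + 4 * d) := fun i _ _ =>
    ⟨by nlinarith, by nlinarith⟩
  rw [quarterDiff, h v (by simpa using mem 0 le_rfl (by norm_num)),
    h _ (by simpa using mem 1 zero_le_one (by norm_num)), h _ (mem 3 (by norm_num) (by norm_num)),
    h _ (mem 4 (by norm_num) le_rfl)]
  ring

lemma quarterDiff_eq_zero_of_add_eq (hd : 0 ≤ d) {c : ℝ}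
    (h : ∀ x ∈ Set.Icc v (v + 2 * d), f (x + 2 * d) = f x + c) : quarterDiff f v d = 0 := by
  have h₀ := h v ⟨le_rfl, by linarith⟩
  have h₁ := h (v + d) ⟨by linarith, by linarith⟩
  have h₂ := h (v + 2 * d) ⟨by linarith, le_rfl⟩
  rw [quarterDiff, show v + 3 * d = v + d + 2 * d by ring,
    show v + 4 * d = v + 2 * d + 2 * d by ring, h₁, h₂, h₀]
  ring

end QuarterDiff

section QuarterDiffHatIntegralSum

variable {N : ℕ} {v d : ℝ}

lemma quarterDiff_hatIntegralSum_quarter {k : ℕ} (hk : k < N) :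
    quarterDiff (hatIntegralSum N) k (1 / 4) = 1 / 8 := by
  have eval : ∀ i : ℝ, 0 ≤ i → i ≤ 4 →
      hatIntegralSum N (k + i * (1 / 4)) = k / 4 + hatIntegral (i / 4) := fun i h₀ h₄ => by
    rw [hatIntegralSum_of_mem_Icc hk ⟨by linarith, by linarith⟩]
    ring_nf
  have e₀ := eval 0 le_rfl (by norm_num)
  have e₁ := eval 1 zero_le_one (by norm_num)
  have e₃ := eval 3 (by norm_num) (by norm_num)
  have e₄ := eval 4 (by norm_num) le_rfl
  simp only [zero_mul, add_zero, one_mul] at e₀ e₁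
  rw [quarterDiff, e₀, e₁, e₃, e₄, zero_div, div_self four_ne_zero,
    hatIntegral_of_nonpos le_rfl, hatIntegral_of_le_half (by norm_num) (by norm_num),
    hatIntegral_of_half_le (by norm_num) (by norm_num), hatIntegral_of_one_le le_rfl]
  ring

lemma quarterDiff_hatIntegralSum_of_half_nat (M : ℕ) (hv : 0 ≤ v) (hN : v + 2 * M ≤ N) :
    quarterDiff (hatIntegralSum N) v (M / 2) = 0 := by
  refine quarterDiff_eq_zero_of_add_eq (by positivity) (c := M / 4) fun x hx => ?_
  rw [mul_div_cancel₀ _ two_ne_zero] at hx ⊢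
  exact hatIntegralSum_add_nat M (hv.trans hx.1) (by linarith [hx.2])

lemma quarterDiff_hatIntegralSum_of_subset_Icc {q : ℕ} (hq : q < 2 * N) (hd : 0 ≤ d)
    (hv : q / 2 ≤ v) (hvd : v + 4 * d ≤ (q + 1) / 2) :
    quarterDiff (hatIntegralSum N) v d = 0 := by
  obtain ⟨α, β, γ, h⟩ := exists_quadratic_eqOn_hatIntegralSum hq
  exact quarterDiff_eq_zero_of_eqOn_quadratic hd fun x hx =>
    h x ⟨hv.trans hx.1, hx.2.trans hvd⟩

lemma quarterDiff_hatIntegralSum_dyadic {n k : ℕ} (hk : k < 2 ^ n) (m : ℕ) :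
    quarterDiff (hatIntegralSum (2 ^ m)) (2 ^ m * (4 * k / 2 ^ (n + 2)))
      (2 ^ m * (1 / 2 ^ (n + 2))) = if m = n then 1 / 8 else 0 := by
  rcases lt_trichotomy m n with hmn | rfl | hmn
  · obtain ⟨p, rfl⟩ : ∃ p, n = m + p + 1 := ⟨n - m - 1, by omega⟩
    rw [if_neg (by omega)]
    have hq : k / 2 ^ p < 2 * 2 ^ m := Nat.div_lt_of_lt_mul (hk.trans_eq (by ring))
    have hlow : 2 ^ p * (k / 2 ^ p) ≤ k := Nat.mul_div_le k _
    have hhigh : k + 1 ≤ 2 ^ p * (k / 2 ^ p + 1) := Nat.lt_mul_div_succ k (by positivity)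
    have hlowR : (2 : ℝ) ^ p * ↑(k / 2 ^ p) ≤ k := by exact_mod_cast hlow
    have hhighR : (k : ℝ) + 1 ≤ 2 ^ p * (↑(k / 2 ^ p) + 1) := by exact_mod_cast hhigh
    have hv : (2 : ℝ) ^ m * (4 * k / 2 ^ (m + p + 1 + 2)) = k / (2 ^ p * 2) := by
      field_simp; ring
    have hd : (2 : ℝ) ^ m * (1 / 2 ^ (m + p + 1 + 2)) = 1 / (2 ^ p * 8) := by
      field_simp; ring
    rw [hv, hd]
    refine quarterDiff_hatIntegralSum_of_subset_Icc hq (by positivity) ?_ ?_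
    · rw [le_div_iff₀ (by positivity)]
      linarith
    · rw [show (k : ℝ) / (2 ^ p * 2) + 4 * (1 / (2 ^ p * 8)) = (k + 1) / (2 ^ p * 2) by
        field_simp; ring, div_le_div_iff₀ (by positivity) two_pos]
      linarith
  · rw [if_pos rfl]
    convert quarterDiff_hatIntegralSum_quarter hk using 2 <;> field_simp <;> ring
  · obtain ⟨p, rfl⟩ : ∃ p, m = n + 1 + p := ⟨m - n - 1, by omega⟩
    rw [if_neg (by omega)]
    have hd : (2 : ℝ) ^ (n + 1 + p) * (1 / 2 ^ (n + 2)) = ((2 ^ p : ℕ) : ℝ) / 2 := by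
      push_cast; field_simp; ring
    have hv : (2 : ℝ) ^ (n + 1 + p) * (4 * k / 2 ^ (n + 2)) = 2 ^ (p + 1) * k := by
      field_simp; ring
    have hkR : (k : ℝ) + 1 ≤ 2 ^ n := by exact_mod_cast hk
    rw [hd, hv]
    refine quarterDiff_hatIntegralSum_of_half_nat _ (by positivity) ?_
    push_cast
    calc (2 : ℝ) ^ (p + 1) * k + 2 * 2 ^ p = 2 ^ (p + 1) * (k + 1) := by ring
      _ ≤ 2 ^ (p + 1) * 2 ^ n := by gcongr
      _ = 2 ^ (n + 1 + p) := by ring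

end QuarterDiffHatIntegralSum

section TakagiLandsberg

open Real

lemma continuous_emk (m k : ℕ) : Continuous (emk m k) := by
  unfold emk
  exact continuous_const.mul (continuous_e00.comp (by fun_prop))

lemma emk_nonneg (m k : ℕ) (t : ℝ) : 0 ≤ emk m k t :=
  mul_nonneg (by positivity) (e00_nonneg _)

lemma integral_emk (m k : ℕ) (t : ℝ) :
    ∫ s in (0 : ℝ)..t, emk m k s =
      2 ^ (-(m : ℝ) / 2) / 2 ^ m * hatIntegral (2 ^ m * t - k) := by
  have hshift : ∫ s in -(k : ℝ)..2 ^ m * t - k, e00 s = hatIntegral (2 ^ m * t - k) := by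
    rw [← integral_interval_sub_left (intervalIntegrable_e00 _ _) (intervalIntegrable_e00 _ _),
      ← hatIntegral, ← hatIntegral, hatIntegral_of_nonpos (u := -k) (by simp), sub_zero]
  simp only [emk]
  rw [integral_const_mul, integral_comp_mul_sub e00 (pow_ne_zero m two_ne_zero), mul_zero,
    zero_sub, hshift, smul_eq_mul]
  ring

noncomputable def takagiCoeff (R : ℝ) (m : ℕ) : ℝ :=
  2 ^ ((m : ℝ) * (1 / 2 - R)) * 2 ^ (-(m : ℝ) / 2) / 2 ^ m

lemma takagiCoeff_mul_two_pow (R : ℝ) (m : ℕ) : takagiCoeff R m * 2 ^ m = (2 ^ (-R)) ^ m := by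
  rw [takagiCoeff, div_mul_cancel₀ _ (pow_ne_zero m two_ne_zero), ← rpow_add two_pos,
    ← rpow_natCast, ← rpow_mul zero_le_two]
  ring_nf

lemma integral_takagiLevel (R : ℝ) (m : ℕ) (t : ℝ) :
    ∫ s in (0 : ℝ)..t, ∑ k ∈ Finset.range (2 ^ m), 2 ^ ((m : ℝ) * (1 / 2 - R)) * emk m k s
      = takagiCoeff R m * hatIntegralSum (2 ^ m) (2 ^ m * t) := by
  rw [integral_finsetSum (f := fun k s => 2 ^ ((m : ℝ) * (1 / 2 - R)) * emk m k s)
      fun k _ => (continuous_const.mul (continuous_emk m k)).intervalIntegrable 0 t,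
    hatIntegralSum, Finset.mul_sum]
  refine Finset.sum_congr rfl fun k _ => ?_
  rw [integral_const_mul, integral_emk, takagiCoeff]
  ring

lemma takagiCoeff_mul_hatIntegralSum_mem_Icc (R : ℝ) (m : ℕ) (v : ℝ) :
    takagiCoeff R m * hatIntegralSum (2 ^ m) v ∈ Set.Icc 0 ((2 ^ (-R)) ^ m / 4) := by
  have hc : 0 ≤ takagiCoeff R m := by unfold takagiCoeff; positivity
  obtain ⟨h₀, h₁⟩ := hatIntegralSum_mem_Icc (2 ^ m) v
  refine ⟨mul_nonneg hc h₀, ?_⟩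
  calc takagiCoeff R m * hatIntegralSum (2 ^ m) v ≤ takagiCoeff R m * (2 ^ m / 4) := by
        push_cast at h₁; gcongr
    _ = (2 ^ (-R)) ^ m / 4 := by rw [← takagiCoeff_mul_two_pow]; ring

lemma summable_takagiCoeff_mul_hatIntegralSum {R : ℝ} (hR : 0 < R) (t : ℝ) :
    Summable fun m => takagiCoeff R m * hatIntegralSum (2 ^ m) (2 ^ m * t) :=
  Summable.of_nonneg_of_le (fun m => (takagiCoeff_mul_hatIntegralSum_mem_Icc R m _).1)
    (fun m => (takagiCoeff_mul_hatIntegralSum_mem_Icc R m _).2)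
    ((summable_geometric_of_lt_one (by positivity)
      (rpow_lt_one_of_one_lt_of_neg one_lt_two (neg_neg_of_pos hR))).div_const 4)

lemma hasSum_yR {R t : ℝ} (hR : 0 < R) (ht : 0 ≤ t) :
    HasSum (fun m => takagiCoeff R m * hatIntegralSum (2 ^ m) (2 ^ m * t)) (yR R t) := by
  set F : ℕ → ℝ → ℝ := fun m s =>
    ∑ k ∈ Finset.range (2 ^ m), 2 ^ ((m : ℝ) * (1 / 2 - R)) * emk m k s
  have hF_cont : ∀ m, Continuous (F m) := fun m =>
    continuous_finsetSum _ fun k _ => continuous_const.mul (continuous_emk m k)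
  have hF_nonneg : ∀ m s, 0 ≤ F m s := fun m s =>
    Finset.sum_nonneg fun k _ => mul_nonneg (by positivity) (emk_nonneg m k s)
  have hF_int : ∀ m,
      ∫ s in Set.Ioc 0 t, F m s = takagiCoeff R m * hatIntegralSum (2 ^ m) (2 ^ m * t) :=
    fun m => by rw [← integral_of_le ht, integral_takagiLevel]
  have hsum := MeasureTheory.hasSum_integral_of_summable_integral_norm
    (μ := MeasureTheory.volume.restrict (Set.Ioc 0 t))
    (fun m => (hF_cont m).integrableOn_Ioc (a := 0) (b := t))
    ((summable_takagiCoeff_mul_hatIntegralSum hR t).congr fun m => by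
      simp only [← hF_int, Real.norm_of_nonneg (hF_nonneg _ _)])
  rw [funext hF_int] at hsum
  rwa [yR, integral_of_le ht]

lemma two_rpow_mul_takagiCoeff (R : ℝ) (n : ℕ) :
    (2 : ℝ) ^ ((3 * (n : ℝ)) / 2 + 3) * (takagiCoeff R n * (1 / 8)) =
      2 ^ ((n : ℝ) * (1 / 2 - R)) := by
  have hpow : (2 : ℝ) ^ ((3 * (n : ℝ)) / 2 + 3) * 2 ^ (-(n : ℝ) / 2) = 2 ^ n * 8 := by
    rw [← rpow_add two_pos,
      show 3 * (n : ℝ) / 2 + 3 + -n / 2 = ((n + 3 : ℕ) : ℝ) by push_cast; ring, rpow_natCast]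
    ring
  calc _ = 2 ^ ((n : ℝ) * (1 / 2 - R)) *
        ((2 : ℝ) ^ ((3 * (n : ℝ)) / 2 + 3) * 2 ^ (-(n : ℝ) / 2) / (2 ^ n * 8)) := by
        rw [takagiCoeff]; ring
    _ = 2 ^ ((n : ℝ) * (1 / 2 - R)) := by rw [hpow, div_self (by positivity), mul_one]

lemma vartheta_yR {R : ℝ} (hR : 0 < R) {n k : ℕ} (hk : k < 2 ^ n) :
    vartheta (yR R) n k = 2 ^ ((n : ℝ) * (1 / 2 - R)) := by
  set v : ℝ := 4 * k / 2 ^ (n + 2)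
  set d : ℝ := 1 / 2 ^ (n + 2)
  have hterms : HasSum (fun m => quarterDiff
      (fun t => takagiCoeff R m * hatIntegralSum (2 ^ m) (2 ^ m * t)) v d)
      (quarterDiff (yR R) v d) :=
    HasSum.quarterDiff (hasSum_yR hR (by positivity)) (hasSum_yR hR (by positivity))
      (hasSum_yR hR (by positivity)) (hasSum_yR hR (by positivity))
  have hterm : ∀ m,
      quarterDiff (fun t => takagiCoeff R m * hatIntegralSum (2 ^ m) (2 ^ m * t)) v d =
        if m = n then takagiCoeff R n * (1 / 8) else 0 := fun m => by
    rw [quarterDiff_const_mul_comp_mul (f := hatIntegralSum (2 ^ m)),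
      quarterDiff_hatIntegralSum_dyadic hk]
    split_ifs with h
    exacts [by rw [h], mul_zero _]
  rw [funext hterm] at hterms
  rw [vartheta_eq_quarterDiff, ← (hasSum_ite_eq n _).unique hterms, two_rpow_mul_takagiCoeff]

end TakagiLandsberg

lemma Rhat_eq_of_vartheta_eq {y : ℝ → ℝ} {n : ℕ} (hn : n ≠ 0) {R : ℝ}
    (h : ∀ k < 2 ^ n, vartheta y n k = 2 ^ ((n : ℝ) * (1 / 2 - R))) : Rhat y n = R := by
  have hsqrt : Real.sqrt (∑ k ∈ Finset.range (2 ^ n), vartheta y n k ^ 2)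
      = 2 ^ ((n : ℝ) / 2 + n * (1 / 2 - R)) := by
    rw [Finset.sum_congr rfl fun k hk => by rw [h k (Finset.mem_range.mp hk)], Finset.sum_const,
      Finset.card_range, nsmul_eq_mul, Real.sqrt_mul (by positivity),
      Real.sqrt_sq (by positivity), Real.rpow_add two_pos, Real.sqrt_eq_rpow, Nat.cast_pow,
      Nat.cast_ofNat, ← Real.rpow_natCast, ← Real.rpow_mul zero_le_two]
    ring_nf
  have hn' : (n : ℝ) ≠ 0 := Nat.cast_ne_zero.mpr hn
  rw [Rhat, hsqrt, Real.logb_rpow two_pos (by norm_num)]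
  field_simp
  ring

theorem stmt4 (R : ℝ) (hR : R ∈ Set.Ioc (0 : ℝ) 1) :
    (∀ n k : ℕ, k < 2 ^ n → vartheta (yR R) n k = 2 ^ ((n : ℝ) * (1 / 2 - R))) ∧
    (∀ n : ℕ, n ≠ 0 → Rhat (yR R) n = R) := by
  have hvartheta : ∀ n k : ℕ, k < 2 ^ n → vartheta (yR R) n k = 2 ^ ((n : ℝ) * (1 / 2 - R)) :=
    fun _ _ hk => vartheta_yR hR.1 hk
  exact ⟨hvartheta, fun n hn => Rhat_eq_of_vartheta_eq hn (hvartheta n)⟩
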